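/- Assume ω_{134} ≠ ω_{234}, assume ω_{123}, ω_{124}, ω_{134}, ω_{234} are all nonzero, and assume v_{12} and v_{34} are linearly independent; let U₀ = span{v_{12}, v_{34}} (which contains all six vectors v_{ij}). Let B₀ be the symmetric bilinear form on U₀ determined by B₀(v_{12}, v_{12}) = ω_{134}ω_{234}, B₀(v_{34}, v_{34}) = −ω_{123}ω_{124}, B₀(v_{12}, v_{34}) = 0. Then a symmetric bilinear form B on U₀ satisfies the three 'opposite-edge orthogonality' conditions B(v_{12}, v_{34}) = 0, B(v_{13}, v_{24}) = 0, B(v_{14}, v_{23}) = 0 if and only if B = c·B₀ for some c ∈ ℂ; in particular, the space of such forms is one-dimensional. -/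

import Mathlib

/-!
Put `d = ω₁₂₄ - ω₁₂₃`, which equals `ω₁₃₄ - ω₂₃₄` because `ω` is a coboundary. Eliminating
`v₁₄, v₂₃, v₂₄` by the boundary relations, the last relation becomes
`d • v₁₃ = -ω₁₂₄ • v₁₂ - ω₂₃₄ • v₃₄`, and then `d • v₂₄ = -ω₁₂₃ • v₁₂ - ω₁₃₄ • v₃₄`.
For a symmetric form the boundary relations alone give
`B(v₁₃, v₂₄) = B(v₁₄, v₂₃) + B(v₁₂, v₃₄)`, so once `B(v₁₂, v₃₄) = 0` the three conditions
reduce to `d² B(v₁₃, v₂₄) = ω₁₂₃ω₁₂₄ B(v₁₂, v₁₂) + ω₁₃₄ω₂₃₄ B(v₃₄, v₃₄) = 0`, which says that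
`(B(v₁₂, v₁₂), B(v₃₄, v₃₄))` is proportional to `(ω₁₃₄ω₂₃₄, -ω₁₂₃ω₁₂₄)`.
-/

theorem exists_mul_eq_and_mul_eq_iff {K : Type*} [Field K] {a b x y : K} (ha : a ≠ 0) :
    (∃ c, x = c * a ∧ y = c * b) ↔ b * x = a * y := by
  constructor
  · rintro ⟨c, rfl, rfl⟩
    ring
  · intro h
    refine ⟨x / a, by field_simp, ?_⟩
    field_simp
    linear_combination -h

section Tetrahedron

variable {R M : Type*} [CommRing R] [AddCommGroup M] [Module R M]
  {v12 v13 v14 v23 v24 v34 : M}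

theorem sub_smul_v13_eq {ν12 ν13 ν14 ν23 ν24 ν34 ω123 ω124 ω234 : R}
    (hω123 : ω123 = ν23 - ν13 + ν12) (hω124 : ω124 = ν24 - ν14 + ν12)
    (hω234 : ω234 = ν34 - ν24 + ν23)
    (h1 : v12 + v13 + v14 = 0) (h2 : -v12 + v23 + v24 = 0) (h3 : -v13 - v23 + v34 = 0)
    (h5 : ν12 • v12 + ν13 • v13 + ν14 • v14 + ν23 • v23 + ν24 • v24 + ν34 • v34 = 0) :
    (ω124 - ω123) • v13 = -(ω124 • v12) - ω234 • v34 := by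
  subst hω123 hω124 hω234
  linear_combination (norm := module) h5 - ν14 • h1 - ν24 • h2 + (ν23 - ν24) • h3

variable {B : M →ₗ[R] M →ₗ[R] R}

theorem apply_v13_v24_eq (hB : ∀ x y, B x y = B y x)
    (h1 : v12 + v13 + v14 = 0) (h2 : -v12 + v23 + v24 = 0) (h3 : -v13 - v23 + v34 = 0) :
    B v13 v24 = B v14 v23 + B v12 v34 := by
  rw [show v14 = -v12 - v13 by linear_combination (norm := module) h1,
    show v24 = v12 - v34 + v13 by linear_combination (norm := module) h2 + h3,
    show v23 = v34 - v13 by linear_combination (norm := module) -h3]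
  simp only [map_add, map_sub, map_neg, LinearMap.sub_apply, LinearMap.neg_apply,
    hB v13 v12]
  ring

theorem sub_sq_mul_apply_v13_v24 {ω123 ω124 ω134 ω234 : R} (hB : ∀ x y, B x y = B y x)
    (h2 : -v12 + v23 + v24 = 0) (h3 : -v13 - v23 + v34 = 0)
    (hcocycle : ω134 - ω234 = ω124 - ω123)
    (h13 : (ω124 - ω123) • v13 = -(ω124 • v12) - ω234 • v34) :
    (ω124 - ω123) ^ 2 * B v13 v24 = ω123 * ω124 * B v12 v12
      + (ω124 * ω134 + ω123 * ω234) * B v12 v34 + ω134 * ω234 * B v34 v34 := by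
  have h24 : (ω124 - ω123) • v24 = -(ω123 • v12) - ω134 • v34 := by
    linear_combination (norm := module) (ω124 - ω123) • (h2 + h3) + h13 + hcocycle • v34
  calc (ω124 - ω123) ^ 2 * B v13 v24 = B ((ω124 - ω123) • v13) ((ω124 - ω123) • v24) := by
        simp only [map_smul, LinearMap.smul_apply, smul_eq_mul]
        ring
    _ = _ := by
        rw [h13, h24]
        simp only [map_sub, map_neg, map_smul, LinearMap.sub_apply, LinearMap.neg_apply,
          LinearMap.smul_apply, smul_eq_mul, hB v34 v12]
        ring

end Tetrahedron

theorem opposite_edges_orthogonal_iff {K M : Type*} [Field K] [AddCommGroup M] [Module K M]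
    {v12 v13 v14 v23 v24 v34 : M} {ω123 ω124 ω134 ω234 : K} {B : M →ₗ[K] M →ₗ[K] K}
    (hB : ∀ x y, B x y = B y x)
    (h1 : v12 + v13 + v14 = 0) (h2 : -v12 + v23 + v24 = 0) (h3 : -v13 - v23 + v34 = 0)
    (hcocycle : ω134 - ω234 = ω124 - ω123) (hd : ω124 - ω123 ≠ 0)
    (h13 : (ω124 - ω123) • v13 = -(ω124 • v12) - ω234 • v34) :
    (B v12 v34 = 0 ∧ B v13 v24 = 0 ∧ B v14 v23 = 0) ↔
      B v12 v34 = 0 ∧ -(ω123 * ω124) * B v12 v12 = ω134 * ω234 * B v34 v34 := by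
  have hsq := sub_sq_mul_apply_v13_v24 hB h2 h3 hcocycle h13
  rw [apply_v13_v24_eq hB h1 h2 h3] at hsq ⊢
  constructor
  · rintro ⟨h12, h, -⟩
    rw [h, h12] at hsq
    exact ⟨h12, by linear_combination hsq⟩
  · rintro ⟨h12, h⟩
    have hsq0 : (ω124 - ω123) ^ 2 * B v14 v23 = 0 := by
      rw [h12] at hsq
      linear_combination hsq - h
    have h1423 := (mul_eq_zero.1 hsq0).resolve_left (pow_ne_zero 2 hd)
    simp only [h12, h1423, add_zero, and_self]

theorem orthogonality_conditions_iff_multiple_of_B₀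
    (U : Type*) [AddCommGroup U] [Module ℂ U]
    (ν12 ν13 ν14 ν23 ν24 ν34 ω123 ω124 ω134 ω234 : ℂ)
    (hω123 : ω123 = ν23 - ν13 + ν12) (hω124 : ω124 = ν24 - ν14 + ν12)
    (hω134 : ω134 = ν34 - ν14 + ν13) (hω234 : ω234 = ν34 - ν24 + ν23)
    (v12 v13 v14 v23 v24 v34 : U)
    (h1 : v12 + v13 + v14 = 0) (h2 : -v12 + v23 + v24 = 0)
    (h3 : -v13 - v23 + v34 = 0)
    (h5 : ν12 • v12 + ν13 • v13 + ν14 • v14 + ν23 • v23 + ν24 • v24 + ν34 • v34 = 0)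
    (hne : ω134 ≠ ω234)
    (hnz134 : ω134 ≠ 0) (hnz234 : ω234 ≠ 0)
    (U₀ : Submodule ℂ U)
    (h12 : v12 ∈ U₀) (h13 : v13 ∈ U₀) (h14 : v14 ∈ U₀)
    (h23 : v23 ∈ U₀) (h24 : v24 ∈ U₀) (h34 : v34 ∈ U₀)
    (B : ↥U₀ →ₗ[ℂ] ↥U₀ →ₗ[ℂ] ℂ) (hsym : ∀ u v, B u v = B v u) :
    (B ⟨v12, h12⟩ ⟨v34, h34⟩ = 0 ∧ B ⟨v13, h13⟩ ⟨v24, h24⟩ = 0 ∧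
        B ⟨v14, h14⟩ ⟨v23, h23⟩ = 0) ↔
      ∃ c : ℂ, B ⟨v12, h12⟩ ⟨v12, h12⟩ = c * (ω134 * ω234) ∧
        B ⟨v34, h34⟩ ⟨v34, h34⟩ = c * (-(ω123 * ω124)) ∧
        B ⟨v12, h12⟩ ⟨v34, h34⟩ = c * 0 := by
  have hcocycle : ω134 - ω234 = ω124 - ω123 := by
    rw [hω123, hω124, hω134, hω234]
    ring
  have hd : ω124 - ω123 ≠ 0 := hcocycle ▸ sub_ne_zero.2 hne
  have h1' : (⟨v12, h12⟩ + ⟨v13, h13⟩ + ⟨v14, h14⟩ : U₀) = 0 := Subtype.ext h1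
  have h2' : (-⟨v12, h12⟩ + ⟨v23, h23⟩ + ⟨v24, h24⟩ : U₀) = 0 := Subtype.ext h2
  have h3' : (-⟨v13, h13⟩ - ⟨v23, h23⟩ + ⟨v34, h34⟩ : U₀) = 0 := Subtype.ext h3
  have h5' : (ν12 • ⟨v12, h12⟩ + ν13 • ⟨v13, h13⟩ + ν14 • ⟨v14, h14⟩ + ν23 • ⟨v23, h23⟩
      + ν24 • ⟨v24, h24⟩ + ν34 • ⟨v34, h34⟩ : U₀) = 0 := Subtype.ext h5
  rw [opposite_edges_orthogonal_iff hsym h1' h2' h3' hcocycle hd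
    (sub_smul_v13_eq hω123 hω124 hω234 h1' h2' h3' h5')]
  simp only [mul_zero, ← and_assoc, exists_and_right,
    exists_mul_eq_and_mul_eq_iff (mul_ne_zero hnz134 hnz234)]
  exact and_comm
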